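/- arXiv:1805.10048 — 4 statements merged into one kernel-verified Lean document; each statement's English description precedes it below -/
import Mathlib

section
/- Let T be a bounded linear operator on a separable Banach space B. Suppose there exist dense subsets Y1, Y2 of B and a (not necessarily linear or continuous) map S : Y1 → Y1 such that (i) Tⁿy → 0 as n → ∞ for every y ∈ Y2, (ii) Sⁿx → 0 as n → ∞ for every x ∈ Y1, and (iii) T(Sx) = x for every x ∈ Y1. Then T is hypercyclic, i.e., there exists x ∈ B whose orbit {Tⁿx : n ∈ ℕ} is dense in B. -/
/-!
By the Birkhoff transitivity theorem it suffices that for all nonempty open `U`, `W` some iterate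
of `T` maps a point of `W` into `U`: then the points visiting every member of a countable basis
form a countable intersection of dense open sets, which is nonempty by Baire's theorem. To find
such a point, pick `y ∈ W ∩ Y₂` and `z ∈ U ∩ Y₁`; the point `y + Sⁿ z` tends to `y`, while its
image `Tⁿ y + z` under `Tⁿ` tends to `z`.
-/

open Filter Topology Set TopologicalSpace

theorem Set.LeftInvOn.iterate {α : Type*} {f f' : α → α} {s : Set α} (h : LeftInvOn f' f s)
    (hf : MapsTo f s s) (n : ℕ) : LeftInvOn f'^[n] f^[n] s := by
  induction n with
  | zero => exact fun _ _ => rfl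
  | succ n ih =>
    intro x hx
    rw [Function.iterate_succ_apply, Function.iterate_succ_apply', h (hf.iterate n hx), ih hx]

theorem dense_iUnion_preimage_iterate_of_transitive {X : Type*} [TopologicalSpace X]
    {f : X → X}
    (htrans : ∀ U W : Set X, IsOpen U → U.Nonempty → IsOpen W → W.Nonempty →
      ∃ n, (W ∩ f^[n] ⁻¹' U).Nonempty)
    {U : Set X} (hU : IsOpen U) (hUne : U.Nonempty) : Dense (⋃ n, f^[n] ⁻¹' U) := by
  refine dense_iff_inter_open.2 fun W hW hWne => ?_
  obtain ⟨n, x, hxW, hxU⟩ := htrans U W hU hUne hW hWne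
  exact ⟨x, hxW, mem_iUnion.2 ⟨n, hxU⟩⟩

theorem exists_dense_range_iterate_of_transitive {X : Type*} [TopologicalSpace X]
    [Nonempty X] [BaireSpace X] [SecondCountableTopology X] {f : X → X} (hf : Continuous f)
    (htrans : ∀ U W : Set X, IsOpen U → U.Nonempty → IsOpen W → W.Nonempty →
      ∃ n, (W ∩ f^[n] ⁻¹' U).Nonempty) :
    ∃ x, Dense (range fun n => f^[n] x) := by
  obtain ⟨b, hbc, -, hb⟩ := exists_countable_basis X
  have hdense : Dense (⋂ U ∈ {U ∈ b | U.Nonempty}, ⋃ n, f^[n] ⁻¹' U) :=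
    dense_biInter_of_isOpen
      (fun U hU => isOpen_iUnion fun n => (hb.isOpen hU.1).preimage (hf.iterate n))
      (hbc.mono (sep_subset _ _))
      (fun U hU => dense_iUnion_preimage_iterate_of_transitive htrans (hb.isOpen hU.1) hU.2)
  obtain ⟨x, hx⟩ := hdense.nonempty
  refine ⟨x, hb.dense_iff.2 fun U hU hUne => ?_⟩
  obtain ⟨n, hn⟩ := mem_iUnion.1 (mem_iInter₂.1 hx U ⟨hU, hUne⟩)
  exact ⟨_, hn, n, rfl⟩

theorem exists_inter_preimage_iterate_nonempty_of_kitai {X F : Type*} [TopologicalSpace X]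
    [AddZeroClass X] [ContinuousAdd X] [FunLike F X X] [AddHomClass F X X] (f : F)
    {Y₁ Y₂ : Set X} (hY₁ : Dense Y₁) (hY₂ : Dense Y₂) {S : X → X} (hS : MapsTo S Y₁ Y₁)
    (h1 : ∀ y ∈ Y₂, Tendsto (fun n => f^[n] y) atTop (𝓝 0))
    (h2 : ∀ x ∈ Y₁, Tendsto (fun n => S^[n] x) atTop (𝓝 0))
    (h3 : LeftInvOn f S Y₁)
    {U W : Set X} (hU : IsOpen U) (hUne : U.Nonempty) (hW : IsOpen W) (hWne : W.Nonempty) :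
    ∃ n, (W ∩ f^[n] ⁻¹' U).Nonempty := by
  obtain ⟨y, hyW, hyY₂⟩ := hY₂.inter_open_nonempty W hW hWne
  obtain ⟨z, hzU, hzY₁⟩ := hY₁.inter_open_nonempty U hU hUne
  have hnear_y : Tendsto (fun n => y + S^[n] z) atTop (𝓝 y) := by
    simpa using tendsto_const_nhds.add (h2 z hzY₁)
  have hnear_z : Tendsto (fun n => f^[n] (y + S^[n] z)) atTop (𝓝 z) := by
    simp only [iterate_map_add, h3.iterate hS _ hzY₁]
    simpa using (h1 y hyY₂).add tendsto_const_nhds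
  obtain ⟨n, hnW, hnU⟩ :=
    ((hnear_y.eventually_mem (hW.mem_nhds hyW)).and
      (hnear_z.eventually_mem (hU.mem_nhds hzU))).exists
  exact ⟨n, _, hnW, hnU⟩

/-- Kitai's criterion: if `T` admits dense sets `Y₁, Y₂` and a right inverse `S` on `Y₁`
with the stated convergence properties, then `T` is hypercyclic. -/
theorem kitai_criterion
    {B : Type*} [NormedAddCommGroup B] [NormedSpace ℂ B] [CompleteSpace B]
    [TopologicalSpace.SeparableSpace B]
    (T : B →L[ℂ] B) (Y₁ Y₂ : Set B) (hY₁ : Dense Y₁) (hY₂ : Dense Y₂)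
    (S : B → B) (hS : ∀ x ∈ Y₁, S x ∈ Y₁)
    (h1 : ∀ y ∈ Y₂, Tendsto (fun n : ℕ => (T ^ n) y) atTop (𝓝 0))
    (h2 : ∀ x ∈ Y₁, Tendsto (fun n : ℕ => S^[n] x) atTop (𝓝 0))
    (h3 : ∀ x ∈ Y₁, T (S x) = x) :
    ∃ x : B, Dense (Set.range fun n : ℕ => (T ^ n) x) := by
  simp only [FunLike.coe_pow_eq_iterate] at h1 ⊢
  exact exists_dense_range_iterate_of_transitive T.continuous fun U W hU hUne hW hWne =>
    exists_inter_preimage_iterate_nonempty_of_kitai T hY₁ hY₂ hS h1 h2 h3 hU hUne hW hWne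
end

section
/- Let T be a hypercyclic bounded linear operator on a Banach space B and let T* : B* → B* be its adjoint. Then the point spectrum of T* is empty, i.e., T* has no eigenvalues. -/
/-!
If `φ ∘ T = c • φ` with `φ ≠ 0`, then `φ` maps the orbit of `x` onto the sequence `cⁿ φ(x)`,
and a nonzero functional is surjective, so a dense orbit would give a dense sequence `cⁿ φ(x)`
in `ℂ`. But that sequence either stays in the closed disc of radius `‖φ(x)‖` (when `‖c‖ ≤ 1`
or `φ(x) = 0`) or stays outside the open one (when `‖c‖ > 1`).
-/

section

variable {𝕜 : Type*} [NontriviallyNormedField 𝕜]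

theorem not_denseRange_mul_pow (c a : 𝕜) : ¬DenseRange fun n : ℕ => c ^ n * a := by
  intro hdense
  have hnorm (n : ℕ) : ‖c ^ n * a‖ = ‖c‖ ^ n * ‖a‖ := by rw [norm_mul, norm_pow]
  by_cases hbounded : ‖c‖ ≤ 1 ∨ a = 0
  · have hsub : Set.range (fun n : ℕ => c ^ n * a) ⊆ Metric.closedBall 0 ‖a‖ := by
      rintro _ ⟨n, rfl⟩
      rw [mem_closedBall_zero_iff, hnorm]
      rcases hbounded with hc | rfl
      · exact mul_le_of_le_one_left (norm_nonneg a) (pow_le_one₀ (norm_nonneg c) hc)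
      · simp
    obtain ⟨z, hz⟩ := NormedField.exists_lt_norm 𝕜 ‖a‖
    have := Metric.isClosed_closedBall.closure_subset_iff.2 hsub (hdense z)
    exact (mem_closedBall_zero_iff.1 this).not_gt hz
  · obtain ⟨hc, ha⟩ := not_or.1 hbounded
    rw [not_le] at hc
    have hsub : Set.range (fun n : ℕ => c ^ n * a) ⊆ {z | ‖a‖ ≤ ‖z‖} := by
      rintro _ ⟨n, rfl⟩
      rw [Set.mem_ofPred_eq, hnorm]
      exact le_mul_of_one_le_left (norm_nonneg a) (one_le_pow₀ hc.le)
    have := (isClosed_le continuous_const continuous_norm).closure_subset_iff.2 hsub (hdense 0)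
    exact ha (norm_le_zero_iff.1 (by simpa using this))

variable {E : Type*} [NormedAddCommGroup E] [NormedSpace 𝕜 E]

theorem StrongDual.denseRange_of_ne_zero {φ : StrongDual 𝕜 E} (hφ : φ ≠ 0) : DenseRange φ :=
  (LinearMap.surjective_of_ne_zero (f := (φ : E →ₗ[𝕜] 𝕜))
    (ContinuousLinearMap.coe_injective.ne hφ)).denseRange

theorem StrongDual.comp_pow_eq_pow_smul {T : E →L[𝕜] E} {φ : StrongDual 𝕜 E} {c : 𝕜}
    (h : φ.comp T = c • φ) (n : ℕ) : φ.comp (T ^ n) = c ^ n • φ := by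
  induction n with
  | zero => rw [pow_zero, pow_zero, one_smul]; exact φ.comp_id
  | succ n ih =>
    rw [pow_succ, ContinuousLinearMap.mul_def, ← ContinuousLinearMap.comp_assoc, ih,
      ContinuousLinearMap.smul_comp, h, smul_smul, pow_succ]

end

theorem adjoint_of_hypercyclic_no_eigenvalues_general
    {B : Type*} [NormedAddCommGroup B] [NormedSpace ℂ B]
    (T : B →L[ℂ] B)
    (hT : ∃ x : B, Dense (Set.range fun n : ℕ => (T ^ n) x)) :
    ¬ ∃ (c : ℂ) (φ : StrongDual ℂ B), φ ≠ 0 ∧ φ.comp T = c • φ := by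
  rintro ⟨c, φ, hφ, hφT⟩
  obtain ⟨x, hx⟩ := hT
  have horbit : (φ ∘ fun n : ℕ => (T ^ n) x) = fun n => c ^ n * φ x := by
    funext n
    simpa using DFunLike.congr_fun (StrongDual.comp_pow_eq_pow_smul hφT n) x
  have hdense : DenseRange fun n : ℕ => c ^ n * φ x :=
    horbit ▸ (StrongDual.denseRange_of_ne_zero hφ).comp hx φ.continuous
  exact not_denseRange_mul_pow c (φ x) hdense

/-- If `T` is hypercyclic on a Banach space, then the adjoint `T*` (acting on the dual by
`φ ↦ φ ∘ T`) has empty point spectrum. -/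
theorem adjoint_of_hypercyclic_no_eigenvalues
    {B : Type*} [NormedAddCommGroup B] [NormedSpace ℂ B] [CompleteSpace B]
    (T : B →L[ℂ] B)
    (hT : ∃ x : B, Dense (Set.range fun n : ℕ => (T ^ n) x)) :
    ¬ ∃ (c : ℂ) (φ : StrongDual ℂ B), φ ≠ 0 ∧ φ.comp T = c • φ :=
  adjoint_of_hypercyclic_no_eigenvalues_general T hT
end

section
/- Let T be a hypercyclic bounded linear operator on a Banach space B with adjoint T* on B*. Then for every nonzero functional φ ∈ B*, the orbit {(T*)ⁿφ : n ≥ 0} is unbounded in B*. -/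
/-!
If `‖(T*)ⁿ φ‖ ≤ C` for all `n`, then `|φ (Tⁿ x)| ≤ C ‖x‖` along the orbit of a hypercyclic vector
`x`. A nonzero functional is a continuous surjection onto `ℂ`, so it maps the dense orbit onto a
dense, hence unbounded, subset of `ℂ`.
-/

open Bornology Set

section

variable {𝕜 E F : Type*} [NontriviallyNormedField 𝕜] [NormedAddCommGroup E] [NormedSpace 𝕜 E]
  [NormedAddCommGroup F] [NormedSpace 𝕜 F]

theorem ContinuousLinearMap.iterate_comp_right_apply (T : E →L[𝕜] E) (φ : E →L[𝕜] F) (n : ℕ) :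
    (fun ψ : E →L[𝕜] F => ψ.comp T)^[n] φ = φ.comp (T ^ n) := by
  induction n with
  | zero => rfl
  | succ n ih =>
    rw [Function.iterate_succ_apply', ih, pow_succ, ContinuousLinearMap.mul_def,
      ContinuousLinearMap.comp_assoc]

theorem StrongDual.surjective_of_ne_zero {φ : StrongDual 𝕜 E} (hφ : φ ≠ 0) :
    Function.Surjective φ :=
  LinearMap.surjective (f := (φ : Module.Dual 𝕜 E)) fun h =>
    hφ (ContinuousLinearMap.coe_injective h)

theorem DenseRange.not_isBounded_range {α : Type*} {f : α → 𝕜} (hf : DenseRange f) :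
    ¬ IsBounded (range f) := fun h =>
  NormedSpace.unbounded_univ 𝕜 𝕜 <| by
    rwa [← hf.closure_range, Metric.isBounded_closure_iff]

end

theorem adjoint_orbit_unbounded_of_hypercyclic_general
    {B : Type*} [NormedAddCommGroup B] [NormedSpace ℂ B]
    (T : B →L[ℂ] B)
    (hT : ∃ x : B, Dense (Set.range fun n : ℕ => (T ^ n) x))
    (φ : StrongDual ℂ B) (hφ : φ ≠ 0) :
    ¬ ∃ C : ℝ, ∀ n : ℕ, ‖(fun ψ : StrongDual ℂ B => ψ.comp T)^[n] φ‖ ≤ C := by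
  rintro ⟨C, hC⟩
  obtain ⟨x, hx⟩ := hT
  have hdense : DenseRange fun n : ℕ => φ ((T ^ n) x) :=
    (StrongDual.surjective_of_ne_zero hφ).denseRange.comp hx φ.continuous
  refine hdense.not_isBounded_range (isBounded_iff_forall_norm_le.2 ⟨C * ‖x‖, ?_⟩)
  rintro _ ⟨n, rfl⟩
  calc ‖φ ((T ^ n) x)‖ = ‖φ.comp (T ^ n) x‖ := rfl
    _ ≤ ‖φ.comp (T ^ n)‖ * ‖x‖ := (φ.comp (T ^ n)).le_opNorm x
    _ ≤ C * ‖x‖ := by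
      gcongr
      exact ContinuousLinearMap.iterate_comp_right_apply T φ n ▸ hC n

/-- If `T` is hypercyclic on a Banach space, then for every nonzero functional `φ` in the dual,
the orbit of `φ` under the adjoint `T*` (given by `φ ↦ φ ∘ T`) is unbounded. -/
theorem adjoint_orbit_unbounded_of_hypercyclic
    {B : Type*} [NormedAddCommGroup B] [NormedSpace ℂ B] [CompleteSpace B]
    (T : B →L[ℂ] B)
    (hT : ∃ x : B, Dense (Set.range fun n : ℕ => (T ^ n) x))
    (φ : StrongDual ℂ B) (hφ : φ ≠ 0) :
    ¬ ∃ C : ℝ, ∀ n : ℕ, ‖(fun ψ : StrongDual ℂ B => ψ.comp T)^[n] φ‖ ≤ C :=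
  adjoint_orbit_unbounded_of_hypercyclic_general T hT φ hφ
end

section
/- Let Ω ⊆ ℂ be a connected open set, m : Ω → ℂ holomorphic and nonconstant. Let S = 𝕋 ∩ m(Ω) where 𝕋 is the unit circle, and suppose S is nonempty. For r ∈ ℝ with e^{2πir} ∈ S, let Z_r = {z ∈ Ω : m(z) = e^{2πir}}. Then for every r with e^{2πir} ∈ S, every w ∈ Z_r, and every δ > 0, there exist a rational number ν with e^{2πiν} ∈ S and a point z ∈ Z_ν with |w − z| < δ. -/
/-! By the open mapping theorem, `m '' (ball w δ ∩ Ω)` is an open neighbourhood of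
`exp (2πir)`; its preimage under `t ↦ exp (2πit)` is an open neighbourhood of `r`, so it contains
a rational `ν`. -/

open Complex

theorem DifferentiableOn.isOpen_image_of_nonconst {Ω s : Set ℂ} {m : ℂ → ℂ} (hΩ : IsOpen Ω)
    (hconn : IsPreconnected Ω) (hm : DifferentiableOn ℂ m Ω)
    (hnc : ∃ a ∈ Ω, ∃ b ∈ Ω, m a ≠ m b) (hsΩ : s ⊆ Ω) (hs : IsOpen s) : IsOpen (m '' s) := by
  refine ((hm.analyticOnNhd hΩ).is_constant_or_isOpen hconn).resolve_left ?_ s hsΩ hs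
  rintro ⟨c, hc⟩
  obtain ⟨a, ha, b, hb, hab⟩ := hnc
  exact hab ((hc a ha).trans (hc b hb).symm)

theorem Continuous.exists_rat_mem_of_isOpen {X : Type*} [TopologicalSpace X] {f : ℝ → X}
    (hf : Continuous f) {U : Set X} (hU : IsOpen U) {r : ℝ} (hr : f r ∈ U) :
    ∃ q : ℚ, f q ∈ U :=
  Rat.denseRange_cast.exists_mem_open (hU.preimage hf) ⟨r, hr⟩

theorem rational_angle_preimages_dense_general
    (Ω : Set ℂ) (hΩ : IsOpen Ω) (hconn : IsConnected Ω)
    (m : ℂ → ℂ) (hm : DifferentiableOn ℂ m Ω) (hnc : ∃ a ∈ Ω, ∃ b ∈ Ω, m a ≠ m b) :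
    ∀ r : ℝ, Complex.exp (2 * Real.pi * I * r) ∈ Metric.sphere (0 : ℂ) 1 ∩ m '' Ω →
      ∀ w ∈ Ω, m w = Complex.exp (2 * Real.pi * I * r) →
        ∀ δ > (0 : ℝ), ∃ ν : ℚ,
          Complex.exp (2 * Real.pi * I * (ν : ℝ)) ∈ Metric.sphere (0 : ℂ) 1 ∩ m '' Ω ∧
          ∃ z ∈ Ω, m z = Complex.exp (2 * Real.pi * I * (ν : ℝ)) ∧ ‖w - z‖ < δ := by
  intro r _ w hw hmw δ hδ
  have himage : IsOpen (m '' (Metric.ball w δ ∩ Ω)) :=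
    hm.isOpen_image_of_nonconst hΩ hconn.isPreconnected hnc Set.inter_subset_right
      (Metric.isOpen_ball.inter hΩ)
  have hangle : Continuous fun t : ℝ ↦ Complex.exp (2 * Real.pi * I * t) := by fun_prop
  obtain ⟨ν, z, ⟨hzw, hzΩ⟩, hz⟩ :=
    hangle.exists_rat_mem_of_isOpen himage ⟨w, ⟨Metric.mem_ball_self hδ, hw⟩, hmw⟩
  refine ⟨ν, ⟨?_, z, hzΩ, hz⟩, z, hzΩ, hz, ?_⟩
  · simp [norm_exp]
  · rwa [← dist_eq_norm, dist_comm]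

/-- Preimages of rational-angle points of the unit circle under a nonconstant holomorphic
map are dense in the preimage of the whole unit circle (Lemma 4.4). -/
theorem rational_angle_preimages_dense
    (Ω : Set ℂ) (hΩ : IsOpen Ω) (hconn : IsConnected Ω)
    (m : ℂ → ℂ) (hm : DifferentiableOn ℂ m Ω) (hnc : ∃ a ∈ Ω, ∃ b ∈ Ω, m a ≠ m b)
    (hS : (Metric.sphere (0 : ℂ) 1 ∩ m '' Ω).Nonempty) :
    ∀ r : ℝ, Complex.exp (2 * Real.pi * I * r) ∈ Metric.sphere (0 : ℂ) 1 ∩ m '' Ω →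
      ∀ w ∈ Ω, m w = Complex.exp (2 * Real.pi * I * r) →
        ∀ δ > (0 : ℝ), ∃ ν : ℚ,
          Complex.exp (2 * Real.pi * I * (ν : ℝ)) ∈ Metric.sphere (0 : ℂ) 1 ∩ m '' Ω ∧
          ∃ z ∈ Ω, m z = Complex.exp (2 * Real.pi * I * (ν : ℝ)) ∧ ‖w - z‖ < δ :=
  rational_angle_preimages_dense_general Ω hΩ hconn m hm hnc
end
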